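/- arXiv:2206.05531 — 2 statements merged into one kernel-verified Lean document; each statement's English description precedes it below -/
import Mathlib

section
/- Let (Δx_j, Δy_j) ∈ ℝ² for j = 1,…,n be offset vectors with positive weights ω_j > 0, let L_j = (Δx_j, Δy_j, Δx_j²/2, Δy_j²/2, Δx_j·Δy_j) ∈ ℝ⁵, let L be the n×5 matrix with rows L_j, let ω = diag(ω_1², …, ω_n²), and let A = Lᵀ ω L; assume A is invertible. Let u : ℝ² → ℝ be a polynomial of total degree at most 2, let (x_i, y_i) ∈ ℝ², and set U_j = u(x_i + Δx_j, y_i + Δy_j) − u(x_i, y_i). Then the least-squares solution D = A⁻¹ Lᵀ ω U equals exactly the vector of derivatives (∂u/∂x, ∂u/∂y, ∂²u/∂x², ∂²u/∂y², ∂²u/∂x∂y) evaluated at (x_i, y_i). -/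
/-!
A polynomial of total degree at most two coincides with its second-order Taylor expansion, so the
increments `U` are exactly `L *ᵥ D`, where `D` is the vector of derivatives at `(xᵢ, yᵢ)`.
Weighted least squares recovers any `D` of the form `U = L *ᵥ D` as soon as the normal matrix
`Lᵀ W L` is invertible.
-/

open Matrix MvPolynomial

noncomputable section

def weightedLeastSquares {R m k : Type*} [CommRing R] [Fintype m] [Fintype k] [DecidableEq k]
    (L : Matrix m k R) (W : Matrix m m R) (U : m → R) : k → R :=
  (Lᵀ * W * L)⁻¹ *ᵥ ((Lᵀ * W) *ᵥ U)

theorem weightedLeastSquares_mulVec {R m k : Type*} [CommRing R] [Fintype m] [Fintype k]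
    [DecidableEq k] (L : Matrix m k R) (W : Matrix m m R) (hA : IsUnit (Lᵀ * W * L))
    (D : k → R) : weightedLeastSquares L W (L *ᵥ D) = D := by
  rw [weightedLeastSquares, mulVec_mulVec, mulVec_mulVec, Matrix.mul_assoc,
    nonsing_inv_mul _ ((isUnit_iff_isUnit_det _).mp hA), one_mulVec]

end

theorem eval_add_sub_eval_monomial_of_le_two {n₀ n₁ : ℕ} (h : n₀ + n₁ ≤ 2) (c x y a b : ℝ) :
    let u := monomial (Finsupp.single 0 n₀ + Finsupp.single 1 n₁) c
    eval ![x + a, y + b] u - eval ![x, y] u =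
      a * eval ![x, y] (pderiv 0 u) + b * eval ![x, y] (pderiv 1 u)
        + a ^ 2 / 2 * eval ![x, y] (pderiv 0 (pderiv 0 u))
        + b ^ 2 / 2 * eval ![x, y] (pderiv 1 (pderiv 1 u))
        + a * b * eval ![x, y] (pderiv 1 (pderiv 0 u)) := by
  obtain ⟨h₀, h₁⟩ : n₀ ≤ 2 ∧ n₁ ≤ 2 := by omega
  interval_cases n₀ <;> interval_cases n₁ <;>
    simp_all [pderiv_monomial, eval_monomial] <;> ring

theorem eval_add_sub_eval_of_totalDegree_le_two {u : MvPolynomial (Fin 2) ℝ}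
    (hu : u.totalDegree ≤ 2) (x y a b : ℝ) :
    eval ![x + a, y + b] u - eval ![x, y] u =
      a * eval ![x, y] (pderiv 0 u) + b * eval ![x, y] (pderiv 1 u)
        + a ^ 2 / 2 * eval ![x, y] (pderiv 0 (pderiv 0 u))
        + b ^ 2 / 2 * eval ![x, y] (pderiv 1 (pderiv 1 u))
        + a * b * eval ![x, y] (pderiv 1 (pderiv 0 u)) := by
  conv_lhs => rw [u.as_sum]
  conv_rhs => rw [u.as_sum]
  simp only [map_sum, Finset.mul_sum, ← Finset.sum_sub_distrib, ← Finset.sum_add_distrib]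
  refine Finset.sum_congr rfl fun d hd => ?_
  have hd_eq : d = Finsupp.single 0 (d 0) + Finsupp.single 1 (d 1) := by
    ext i; fin_cases i <;> simp
  have hd_deg : d 0 + d 1 ≤ 2 := by
    have := le_totalDegree hd
    rw [Finsupp.sum_fintype _ _ fun _ => rfl, Fin.sum_univ_two] at this
    exact this.trans hu
  rw [hd_eq]
  exact eval_add_sub_eval_monomial_of_le_two hd_deg _ x y a b

theorem gfdm_exact_on_quadratics_general
    (n : ℕ) (Δx Δy : Fin n → ℝ)
    (L : Matrix (Fin n) (Fin 5) ℝ)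
    (hL : ∀ j, L j = ![Δx j, Δy j, (Δx j) ^ 2 / 2, (Δy j) ^ 2 / 2, Δx j * Δy j])
    (W : Matrix (Fin n) (Fin n) ℝ)
    (A : Matrix (Fin 5) (Fin 5) ℝ) (hA : A = Lᵀ * W * L)
    (hAunit : IsUnit A)
    (u : MvPolynomial (Fin 2) ℝ) (hu : u.totalDegree ≤ 2)
    (xi yi : ℝ) (U : Fin n → ℝ)
    (hU : ∀ j, U j =
      MvPolynomial.eval ![xi + Δx j, yi + Δy j] u - MvPolynomial.eval ![xi, yi] u) :
    A⁻¹ *ᵥ ((Lᵀ * W) *ᵥ U) =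
      ![MvPolynomial.eval ![xi, yi] (MvPolynomial.pderiv (0 : Fin 2) u),
        MvPolynomial.eval ![xi, yi] (MvPolynomial.pderiv (1 : Fin 2) u),
        MvPolynomial.eval ![xi, yi]
          (MvPolynomial.pderiv (0 : Fin 2) (MvPolynomial.pderiv (0 : Fin 2) u)),
        MvPolynomial.eval ![xi, yi]
          (MvPolynomial.pderiv (1 : Fin 2) (MvPolynomial.pderiv (1 : Fin 2) u)),
        MvPolynomial.eval ![xi, yi]
          (MvPolynomial.pderiv (1 : Fin 2) (MvPolynomial.pderiv (0 : Fin 2) u))] := by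
  have hU_eq : U = L *ᵥ ![eval ![xi, yi] (pderiv 0 u), eval ![xi, yi] (pderiv 1 u),
      eval ![xi, yi] (pderiv 0 (pderiv 0 u)), eval ![xi, yi] (pderiv 1 (pderiv 1 u)),
      eval ![xi, yi] (pderiv 1 (pderiv 0 u))] := by
    funext j
    rw [hU j, eval_add_sub_eval_of_totalDegree_le_two hu]
    simp [mulVec, dotProduct, Fin.sum_univ_five, hL j]
  subst hA
  exact hU_eq ▸ weightedLeastSquares_mulVec L W hAunit _

/-- Polynomial consistency of GFDM: for a bivariate polynomial `u` of total
degree at most 2 the weighted least-squares recovery is exact, producing the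
exact vector of first and second partial derivatives of `u` at `(xᵢ, yᵢ)`. -/
theorem gfdm_exact_on_quadratics
    (n : ℕ) (Δx Δy : Fin n → ℝ) (ω : Fin n → ℝ)
    (hω : ∀ j, 0 < ω j)
    (L : Matrix (Fin n) (Fin 5) ℝ)
    (hL : ∀ j, L j = ![Δx j, Δy j, (Δx j) ^ 2 / 2, (Δy j) ^ 2 / 2, Δx j * Δy j])
    (W : Matrix (Fin n) (Fin n) ℝ)
    (hW : W = Matrix.diagonal (fun j => (ω j) ^ 2))
    (A : Matrix (Fin 5) (Fin 5) ℝ) (hA : A = Lᵀ * W * L)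
    (hAunit : IsUnit A)
    (u : MvPolynomial (Fin 2) ℝ) (hu : u.totalDegree ≤ 2)
    (xi yi : ℝ) (U : Fin n → ℝ)
    (hU : ∀ j, U j =
      MvPolynomial.eval ![xi + Δx j, yi + Δy j] u - MvPolynomial.eval ![xi, yi] u) :
    A⁻¹ *ᵥ ((Lᵀ * W) *ᵥ U) =
      ![MvPolynomial.eval ![xi, yi] (MvPolynomial.pderiv (0 : Fin 2) u),
        MvPolynomial.eval ![xi, yi] (MvPolynomial.pderiv (1 : Fin 2) u),
        MvPolynomial.eval ![xi, yi]
          (MvPolynomial.pderiv (0 : Fin 2) (MvPolynomial.pderiv (0 : Fin 2) u)),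
        MvPolynomial.eval ![xi, yi]
          (MvPolynomial.pderiv (1 : Fin 2) (MvPolynomial.pderiv (1 : Fin 2) u)),
        MvPolynomial.eval ![xi, yi]
          (MvPolynomial.pderiv (1 : Fin 2) (MvPolynomial.pderiv (0 : Fin 2) u))] :=
  gfdm_exact_on_quadratics_general n Δx Δy L hL W A hA hAunit u hu xi yi U hU
end

section
/- Let v_j = (a_j, b_j) ∈ ℝ² and c_j ∈ ℝ for j = 1,…,n satisfy the first-derivative moment conditions Σ_j c_j a_j = 1 and Σ_j c_j b_j = 0, and suppose the stencil is centrally symmetric with antisymmetric coefficients: there is an involution j ↦ j' of {1,…,n} with (a_{j'}, b_{j'}) = (−a_j, −b_j) and c_{j'} = −c_j for every j. Let u : ℝ² → ℝ be three times continuously differentiable on a neighborhood of a point (x₀, y₀). Then there exist constants C > 0 and h₀ > 0 such that for all 0 < h < h₀, |h⁻¹ Σ_{j=1}^n c_j (u(x₀ + h a_j, y₀ + h b_j) − u(x₀, y₀)) − ∂u/∂x(x₀, y₀)| ≤ C h². -/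
open BigOperators Set

lemma myIteratedDerivWithin_of_isOpen {f : ℝ → ℝ} {V : Set ℝ} (hV : IsOpen V) (k : ℕ)
    {x : ℝ} (hx : x ∈ V) : iteratedDerivWithin k f V x = iteratedDeriv k f x := by
  rw [iteratedDerivWithin_eq_iteratedFDerivWithin, iteratedDeriv_eq_iteratedFDeriv,
    iteratedFDerivWithin_of_isOpen k hV hx]

lemma myIterEq {f : ℝ → ℝ} {V : Set ℝ} (hV : IsOpen V) {m : ℕ}
    (hf : ContDiffOn ℝ m f V) {s : Set ℝ} (hs : UniqueDiffOn ℝ s) (hsV : s ⊆ V) :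
    ∀ k : ℕ, k ≤ m → ∀ x ∈ s, iteratedDerivWithin k f s x = iteratedDeriv k f x := by
  intro k
  induction k with
  | zero => intro _ x hx; simp
  | succ k IH =>
    intro hkm x hx
    have hkm' : k ≤ m := Nat.le_of_succ_le hkm
    rw [iteratedDerivWithin_succ]
    rw [derivWithin_congr (fun y hy => IH hkm' y hy) (IH hkm' x hx)]
    have hdiff : DifferentiableAt ℝ (iteratedDeriv k f) x := by
      have h1 : DifferentiableOn ℝ (iteratedDerivWithin k f V) V :=
        hf.differentiableOn_iteratedDerivWithin (by exact_mod_cast hkm) hV.uniqueDiffOn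
      have h2 : DifferentiableWithinAt ℝ (iteratedDeriv k f) V x :=
        (h1 x (hsV hx)).congr (fun y hy => (myIteratedDerivWithin_of_isOpen hV k hy).symm)
          (myIteratedDerivWithin_of_isOpen hV k (hsV hx)).symm
      exact h2.differentiableAt (hV.mem_nhds (hsV hx))
    rw [hdiff.derivWithin (hs x hx)]
    rw [← iteratedDeriv_succ]

/-- Second-order consistency of a centrally symmetric, antisymmetric-coefficient
generalized finite difference stencil for the first derivative `u_x`: with the
first-derivative moment conditions and `u` of class `C³` near `(x₀, y₀)`, the
scaled stencil approximates `∂u/∂x(x₀, y₀)` with error `O(h²)`. -/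
theorem gfdm_antisymmetric_stencil_ux_second_order_consistency
    (n : ℕ) (a b c : Fin n → ℝ)
    (h1 : ∑ j, c j * a j = 1)
    (h2 : ∑ j, c j * b j = 0)
    (σ : Fin n → Fin n) (hσ : Function.Involutive σ)
    (hsa : ∀ j, a (σ j) = - a j)
    (hsb : ∀ j, b (σ j) = - b j)
    (hsc : ∀ j, c (σ j) = - c j)
    (u : ℝ × ℝ → ℝ) (x₀ y₀ : ℝ)
    (hu : ContDiffAt ℝ 3 u (x₀, y₀)) :
    ∃ C > 0, ∃ h₀ > 0, ∀ h : ℝ, 0 < h → h < h₀ →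
      |h⁻¹ * (∑ j, c j * (u (x₀ + h * a j, y₀ + h * b j) - u (x₀, y₀))) -
        deriv (fun x => u (x, y₀)) x₀| ≤ C * h ^ 2 := by
  classical
  -- the permutation
  have hperm := hσ.toPerm σ
  -- sum of coefficients is zero
  have hc0 : ∑ j, c j = 0 := by
    have h := Equiv.sum_comp (hσ.toPerm σ) c
    simp only [Function.Involutive.coe_toPerm, hsc] at h
    rw [Finset.sum_neg_distrib] at h
    linarith
  set L := fderiv ℝ u (x₀, y₀) with hL
  set D := L (1, 0) with hD
  have hudiff : HasFDerivAt u L (x₀, y₀) :=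
    (hu.differentiableAt (by norm_num)).hasFDerivAt
  -- the deriv in the statement equals D
  have hDeq : deriv (fun x => u (x, y₀)) x₀ = D := by
    have hγ : HasDerivAt (fun x : ℝ => ((x, y₀) : ℝ × ℝ)) ((1 : ℝ), (0 : ℝ)) x₀ :=
      (hasDerivAt_id x₀).prodMk (hasDerivAt_const x₀ y₀)
    have hcomp : HasDerivAt (fun x => u (x, y₀)) (L ((1 : ℝ), (0 : ℝ))) x₀ := by
      simpa [Function.comp_def] using hudiff.comp_hasDerivAt x₀ hγ
    exact hcomp.deriv
  -- the stencil function
  set F : ℝ → ℝ := fun h => ∑ j, c j * u (x₀ + h * a j, y₀ + h * b j) with hF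
  -- F is odd
  have hFodd : ∀ x : ℝ, F (-x) = -F x := by
    intro x
    have h := Equiv.sum_comp (hσ.toPerm σ)
      (fun j => c j * u (x₀ + (-x) * a j, y₀ + (-x) * b j))
    simp only [Function.Involutive.coe_toPerm, hsa, hsb, hsc] at h
    rw [hF]
    simp only
    rw [← h, ← Finset.sum_neg_distrib]
    apply Finset.sum_congr rfl
    intro j _
    ring_nf
  have hF0 : F 0 = 0 := by
    rw [hF]; simp only [zero_mul, add_zero]
    rw [← Finset.sum_mul, hc0, zero_mul]
  -- derivative of F at 0
  have hγj : ∀ j, HasDerivAt (fun h : ℝ => ((x₀ + h * a j, y₀ + h * b j) : ℝ × ℝ))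
      ((a j, b j) : ℝ × ℝ) 0 := by
    intro j
    have ha' : HasDerivAt (fun h : ℝ => x₀ + h * a j) (a j) 0 := by
      simpa using ((hasDerivAt_id (0:ℝ)).mul_const (a j)).const_add x₀
    have hb' : HasDerivAt (fun h : ℝ => y₀ + h * b j) (b j) 0 := by
      simpa using ((hasDerivAt_id (0:ℝ)).mul_const (b j)).const_add y₀
    exact ha'.prodMk hb'
  have hFderiv : HasDerivAt F (∑ j, c j * L (a j, b j)) 0 := by
    apply HasDerivAt.fun_sum
    intro j _
    have h0 : HasFDerivAt u L ((x₀ + 0 * a j, y₀ + 0 * b j) : ℝ × ℝ) := by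
      simpa using hudiff
    have hc : HasDerivAt (fun h : ℝ => u (x₀ + h * a j, y₀ + h * b j)) (L (a j, b j)) 0 := by
      simpa [Function.comp_def] using h0.comp_hasDerivAt 0 (hγj j)
    exact hc.const_mul (c j)
  have hLlin : ∀ p q : ℝ, L ((p, q) : ℝ × ℝ) = p * L (1, 0) + q * L (0, 1) := by
    intro p q
    have hpq : ((p, q) : ℝ × ℝ) = p • ((1 : ℝ), (0 : ℝ)) + q • ((0 : ℝ), (1 : ℝ)) := by
      simp [Prod.ext_iff]
    rw [hpq, map_add, map_smul, map_smul, smul_eq_mul, smul_eq_mul]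
  have hD0eq : (∑ j, c j * L (a j, b j)) = D := by
    calc ∑ j, c j * L (a j, b j)
        = ∑ j, ((c j * a j) * L (1, 0) + (c j * b j) * L (0, 1)) := by
          apply Finset.sum_congr rfl; intro j _; rw [hLlin]; ring
      _ = (∑ j, c j * a j) * L (1, 0) + (∑ j, c j * b j) * L (0, 1) := by
          rw [Finset.sum_add_distrib, ← Finset.sum_mul, ← Finset.sum_mul]
      _ = D := by rw [h1, h2]; simp [hD]
  have hFderiv' : HasDerivAt F D 0 := hD0eq ▸ hFderiv
  -- deriv F is even
  have hF1even : ∀ x : ℝ, deriv F x = deriv F (-x) := by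
    intro x
    have hFfun : F = fun y => -F (-y) := by
      funext y
      have := hFodd (-y)
      rwa [neg_neg] at this
    conv_lhs => rw [hFfun]
    rw [deriv.fun_neg, deriv_comp_neg, neg_neg]
  have hF2zero : iteratedDeriv 2 F 0 = 0 := by
    have h2eq : iteratedDeriv 2 F = deriv (deriv F) := by
      rw [iteratedDeriv_succ, iteratedDeriv_one]
    rw [h2eq]
    have hgfun : deriv F = fun y => deriv F (-y) := funext fun y => hF1even y
    have : deriv (deriv F) 0 = -deriv (deriv F) 0 := by
      conv_lhs => rw [hgfun]
      rw [deriv_comp_neg, neg_zero]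
    linarith
  -- open neighborhood where u is C³
  obtain ⟨U, hUmem, hUc⟩ := hu.contDiffOn le_rfl (by simp)
  obtain ⟨V, hVU, hVo, hVmem⟩ := mem_nhds_iff.mp hUmem
  have hVc : ContDiffOn ℝ 3 u V := hUc.mono hVU
  set W : Set ℝ := ⋂ j, (fun h : ℝ => ((x₀ + h * a j, y₀ + h * b j) : ℝ × ℝ)) ⁻¹' V with hW
  have hWo : IsOpen W := isOpen_iInter_of_finite fun j =>
    hVo.preimage (by fun_prop)
  have hW0 : (0 : ℝ) ∈ W := by
    rw [hW]
    refine mem_iInter.mpr fun j => ?_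
    simp only [mem_preimage, zero_mul, add_zero]
    exact hVmem
  have hFW : ContDiffOn ℝ 3 F W := by
    apply ContDiffOn.sum
    intro j _
    apply ContDiffOn.mul contDiffOn_const
    apply hVc.comp
    · exact ((contDiff_const.add (contDiff_id.mul contDiff_const)).prodMk
        (contDiff_const.add (contDiff_id.mul contDiff_const))).contDiffOn
    · exact fun x hx => mem_iInter.mp hx j
  have hFW' : ContDiffOn ℝ ((3 : ℕ) : WithTop ℕ∞) F W := by exact_mod_cast hFW
  have hcont3 : ContinuousOn (iteratedDeriv 3 F) W := by
    have hcc := hFW'.continuousOn_iteratedDerivWithin (m := 3)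
      (by exact_mod_cast le_rfl) hWo.uniqueDiffOn
    exact hcc.congr fun x hx => (myIteratedDerivWithin_of_isOpen hWo 3 hx).symm
  obtain ⟨ε, hε, hball⟩ := Metric.isOpen_iff.mp hWo 0 hW0
  set δ : ℝ := ε / 2 with hδ
  have hδpos : 0 < δ := by positivity
  have hIccW : Icc (-δ) δ ⊆ W := by
    intro y hy
    apply hball
    rw [Metric.mem_ball, Real.dist_eq, sub_zero]
    rcases hy with ⟨hy1, hy2⟩
    rw [abs_lt]
    constructor <;> linarith
  obtain ⟨M, hM⟩ := (isCompact_Icc : IsCompact (Icc (-δ) δ)).exists_bound_of_continuousOn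
    (hcont3.mono hIccW)
  have hM0 : 0 ≤ M := le_trans (norm_nonneg _) (hM 0 ⟨by linarith, by linarith⟩)
  refine ⟨M / 2 + 1, by linarith, δ, hδpos, ?_⟩
  intro h hh0 hhδ
  have hIcc0 : Icc (0 : ℝ) h ⊆ Icc (-δ) δ := Icc_subset_Icc (by linarith) (by linarith)
  have hIccW0 : Icc (0 : ℝ) h ⊆ W := hIcc0.trans hIccW
  have hud : UniqueDiffOn ℝ (Icc (0 : ℝ) h) := uniqueDiffOn_Icc hh0
  have hEq := myIterEq hWo hFW' hud hIccW0
  have hbound : ∀ y ∈ Icc (0 : ℝ) h, ‖iteratedDerivWithin 3 F (Icc (0 : ℝ) h) y‖ ≤ M := by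
    intro y hy
    rw [hEq 3 le_rfl y hy]
    exact hM _ (hIcc0 hy)
  have htay := taylor_mean_remainder_bound (n := 2) hh0.le (hFW'.mono hIccW0)
    (right_mem_Icc.mpr hh0.le) hbound
  have h0mem : (0 : ℝ) ∈ Icc (0 : ℝ) h := left_mem_Icc.mpr hh0.le
  have htv : taylorWithinEval F 2 (Icc (0 : ℝ) h) 0 h = h * D := by
    rw [taylor_within_apply, Finset.sum_range_succ, Finset.sum_range_succ,
      Finset.sum_range_one,
      hEq 0 (by norm_num) 0 h0mem, hEq 1 (by norm_num) 0 h0mem,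
      hEq 2 (by norm_num) 0 h0mem, hF2zero, iteratedDeriv_one, hFderiv'.deriv]
    simp [hF0, iteratedDeriv_zero]
  rw [htv, Real.norm_eq_abs] at htay
  have hsum : (∑ j, c j * (u (x₀ + h * a j, y₀ + h * b j) - u (x₀, y₀))) = F h := by
    rw [hF]
    simp only [mul_sub]
    rw [Finset.sum_sub_distrib, ← Finset.sum_mul, hc0, zero_mul, sub_zero]
  rw [hDeq, hsum]
  have hrw : h⁻¹ * F h - D = h⁻¹ * (F h - h * D) := by
    field_simp
  rw [hrw, abs_mul, abs_inv, abs_of_pos hh0]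
  have htay' : |F h - h * D| ≤ M * h ^ 3 / 2 := by
    simpa [Nat.factorial] using htay
  calc h⁻¹ * |F h - h * D| ≤ h⁻¹ * (M * h ^ 3 / 2) :=
        mul_le_mul_of_nonneg_left htay' (inv_nonneg.mpr hh0.le)
    _ = M / 2 * h ^ 2 := by field_simp
    _ ≤ (M / 2 + 1) * h ^ 2 := by nlinarith [sq_nonneg h]
end
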